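/- Let M be a positive integer, Δ = {φ ∈ ℝ^M : φ_i ≥ 0 for all i, Σ_{i=1}^M φ_i = 1} the standard simplex, b > 0, and L : ℝ^M → ℝ a concave, continuously differentiable function satisfying |L(x + h) − L(x) − ⟨∇L(x), h⟩| ≤ b‖h‖² whenever x and x + h both lie in Δ. Let φ[1] ∈ Δ and define φ[n+1] = (1 − 1/n)·φ[n] + (1/n)·e_{i_n}, where e_j denotes the j-th standard basis vector and i_n is any index maximizing the partial derivative ∂L/∂φ_i at φ[n] over i ∈ {1,…,M}. Then L(φ[n]) converges to max_{φ ∈ Δ} L(φ). -/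

import Mathlib

/-!
Let `ψ` maximize `L` on the simplex and `g n = L ψ - L (φ n)`. The update is a Frank–Wolfe
step of size `1/n`: the quadratic Taylor bound, the gradient inequality of the concave `L`
and the greedy choice of the vertex give `g (n+1) ≤ (1 - 1/n) g n + b / n²`. Multiplied by
`n`, this says that `(n - 1) g n` grows by at most `b / n` per step, so
`n g (n+1) ≤ b H_n ≤ b (1 + log n)` and `g n = O(log n / n)`.
-/

open Filter Topology

section GradientInequality

variable {E : Type*} [NormedAddCommGroup E] [NormedSpace ℝ E]

def QuadraticRemainderOn (b : ℝ) (L : E → ℝ) (s : Set E) : Prop :=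
  ∀ x h, x ∈ s → x + h ∈ s → |L (x + h) - L x - fderiv ℝ L x h| ≤ b * ‖h‖ ^ 2

theorem ConcaveOn.sub_le_fderiv_sub {s : Set E} {L : E → ℝ} {b : ℝ} (hL : ConcaveOn ℝ s L)
    (hrem : QuadraticRemainderOn b L s) {x y : E} (hx : x ∈ s) (hy : y ∈ s) :
    L y - L x ≤ fderiv ℝ L x (y - x) := by
  have hsmall : ∀ t ∈ Set.Ioo (0 : ℝ) 1,
      L y - L x - fderiv ℝ L x (y - x) ≤ b * ‖y - x‖ ^ 2 * t := by
    rintro t ⟨ht0, ht1⟩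
    have hseg : (1 - t) • x + t • y = x + t • (y - x) := by module
    have ht : (0 : ℝ) ≤ 1 - t := by linarith
    have hconc := hL.2 hx hy ht ht0.le (sub_add_cancel 1 t)
    have hmem := hL.1 hx hy ht ht0.le (sub_add_cancel 1 t)
    rw [hseg] at hconc hmem
    have hupper := (abs_le.1 (hrem x _ hx hmem)).2
    rw [map_smul, smul_eq_mul, norm_smul, Real.norm_of_nonneg ht0.le] at hupper
    simp only [smul_eq_mul] at hconc
    refine le_of_mul_le_mul_left ?_ ht0
    linear_combination hconc + hupper
  have hlim : Tendsto (fun t => b * ‖y - x‖ ^ 2 * t) (𝓝[>] 0) (𝓝 0) := by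
    simpa using ((continuous_const_mul (b * ‖y - x‖ ^ 2)).tendsto 0).mono_left
      nhdsWithin_le_nhds
  linarith [ge_of_tendsto hlim (eventually_of_mem (Ioo_mem_nhdsGT one_pos) hsmall)]

end GradientInequality

theorem Convex.mem_of_averaging_step {E : Type*} [AddCommGroup E] [Module ℝ E] {s : Set E}
    (hs : Convex ℝ s) {φ e : ℕ → E} (h1 : φ 1 ∈ s) (he : ∀ n, e n ∈ s)
    (hstep : ∀ n : ℕ, 1 ≤ n → φ (n + 1) = (1 - 1 / (n : ℝ)) • φ n + (1 / (n : ℝ)) • e n) :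
    ∀ n, 1 ≤ n → φ n ∈ s := by
  intro n hn
  induction n, hn using Nat.le_induction with
  | base => exact h1
  | succ n hn ih =>
    have hn' : (1 : ℝ) ≤ n := by exact_mod_cast hn
    rw [hstep n hn]
    exact hs ih (he n) (by rw [sub_nonneg]; exact div_le_one_of_le₀ hn' n.cast_nonneg)
      (by positivity) (sub_add_cancel 1 _)

section StdSimplex

variable {ι : Type*} [Fintype ι]

theorem norm_sub_le_one_of_mem_stdSimplex {x y : ι → ℝ} (hx : x ∈ stdSimplex ℝ ι)
    (hy : y ∈ stdSimplex ℝ ι) : ‖x - y‖ ≤ 1 := by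
  rw [← dist_eq_norm, dist_pi_le_iff zero_le_one]
  exact fun i => Real.dist_le_of_mem_Icc_01 (mem_Icc_of_mem_stdSimplex hx i)
    (mem_Icc_of_mem_stdSimplex hy i)

variable [DecidableEq ι]

theorem apply_le_of_mem_stdSimplex (f : (ι → ℝ) →L[ℝ] ℝ) {i : ι}
    (hi : ∀ j, f (Pi.single j 1) ≤ f (Pi.single i 1)) {y : ι → ℝ} (hy : y ∈ stdSimplex ℝ ι) :
    f y ≤ f (Pi.single i 1) := by
  rw [← convexHull_rangle_single_eq_stdSimplex] at hy
  obtain ⟨_, ⟨j, rfl⟩, hj⟩ :=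
    (f.toLinearMap.convexOn convex_univ).exists_ge_of_mem_convexHull (Set.subset_univ _) hy
  exact hj.trans (hi j)

theorem sub_frankWolfe_step_le {L : (ι → ℝ) → ℝ} {b : ℝ} (hb : 0 ≤ b)
    (hL : ConcaveOn ℝ (stdSimplex ℝ ι) L) (hrem : QuadraticRemainderOn b L (stdSimplex ℝ ι))
    {x ψ : ι → ℝ} (hx : x ∈ stdSimplex ℝ ι) (hψ : ψ ∈ stdSimplex ℝ ι) {i : ι}
    (hi : ∀ j, fderiv ℝ L x (Pi.single j 1) ≤ fderiv ℝ L x (Pi.single i 1))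
    {t : ℝ} (ht0 : 0 ≤ t) (ht1 : t ≤ 1) :
    L ψ - L ((1 - t) • x + t • Pi.single i 1) ≤ (1 - t) * (L ψ - L x) + b * t ^ 2 := by
  set e : ι → ℝ := Pi.single i 1
  have he : e ∈ stdSimplex ℝ ι := single_mem_stdSimplex ℝ i
  have hseg : (1 - t) • x + t • e = x + t • (e - x) := by module
  have hmem : x + t • (e - x) ∈ stdSimplex ℝ ι := by
    rw [← hseg]; exact convex_stdSimplex ℝ ι hx he (by linarith) ht0 (sub_add_cancel 1 t)
  have hlower := (abs_le.1 (hrem x _ hx hmem)).1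
  rw [map_smul, smul_eq_mul, norm_smul, Real.norm_of_nonneg ht0] at hlower
  have hcurv : b * (t * ‖e - x‖) ^ 2 ≤ b * t ^ 2 := by
    gcongr
    exact mul_le_of_le_one_right ht0 (norm_sub_le_one_of_mem_stdSimplex he hx)
  have hgrad : L ψ - L x ≤ fderiv ℝ L x (e - x) := by
    have hψe := apply_le_of_mem_stdSimplex (fderiv ℝ L x) hi hψ
    have := hL.sub_le_fderiv_sub hrem hx hψ
    rw [map_sub] at this ⊢
    linarith
  rw [hseg]
  linarith [mul_le_mul_of_nonneg_left hgrad ht0]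

end StdSimplex

theorem natCast_mul_le_mul_harmonic {g : ℕ → ℝ} {b : ℝ}
    (hrec : ∀ n : ℕ, 1 ≤ n → g (n + 1) ≤ (1 - 1 / n) * g n + b / n ^ 2) (n : ℕ) :
    n * g (n + 1) ≤ b * harmonic n := by
  induction n with
  | zero => simp
  | succ n ih =>
    have hn : (0 : ℝ) < n + 1 := by positivity
    have hstep := mul_le_mul_of_nonneg_left (hrec (n + 1) (by omega)) hn.le
    rw [harmonic_succ]
    push_cast at hstep ⊢
    calc ((n : ℝ) + 1) * g (n + 1 + 1)
        ≤ (n + 1) * ((1 - 1 / (n + 1)) * g (n + 1) + b / (n + 1) ^ 2) := hstep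
      _ = n * g (n + 1) + b * ((n : ℝ) + 1)⁻¹ := by field_simp; ring
      _ ≤ b * harmonic n + b * ((n : ℝ) + 1)⁻¹ := by gcongr
      _ = b * (harmonic n + ((n : ℝ) + 1)⁻¹) := by ring

theorem tendsto_zero_of_le_one_sub_inv_mul_add {g : ℕ → ℝ} {b : ℝ} (hb : 0 ≤ b)
    (hg : ∀ n, 1 ≤ n → 0 ≤ g n)
    (hrec : ∀ n : ℕ, 1 ≤ n → g (n + 1) ≤ (1 - 1 / n) * g n + b / n ^ 2) :
    Tendsto g atTop (𝓝 0) := by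
  have hupper : ∀ n : ℕ, 1 ≤ n → g (n + 1) ≤ b * (1 + Real.log n) / n := by
    intro n hn
    have hn' : (0 : ℝ) < n := by exact_mod_cast hn
    rw [le_div_iff₀ hn', mul_comm]
    exact (natCast_mul_le_mul_harmonic hrec n).trans
      (mul_le_mul_of_nonneg_left (harmonic_le_one_add_log n) hb)
  have hlim : Tendsto (fun n : ℕ => b * (1 + Real.log n) / n) atTop (𝓝 0) := by
    have hlog : Tendsto (fun x : ℝ => Real.log x / x) atTop (𝓝 0) := by
      simpa using Real.tendsto_pow_log_div_mul_add_atTop 1 0 1 one_ne_zero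
    have := ((tendsto_inv_atTop_zero.add hlog).const_mul b).comp tendsto_natCast_atTop_atTop
    rw [add_zero, mul_zero] at this
    exact this.congr fun n => by simp only [Function.comp_apply]; ring
  refine (tendsto_add_atTop_iff_nat 1).mp (tendsto_of_tendsto_of_tendsto_of_le_of_le'
    tendsto_const_nhds hlim ?_ ?_)
  · filter_upwards with n using hg (n + 1) (by omega)
  · filter_upwards [eventually_ge_atTop 1] with n hn using hupper n hn

/-- For a concave, continuously differentiable objective `L` with a quadratic
Taylor-remainder bound on the standard simplex, the greedy online scheduling policy
`φ (n+1) = (1 - 1/n) • φ n + (1/n) • e (i n)` drives the objective value `L (φ n)`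
to the maximum of `L` over the simplex. -/
theorem stmt_4 (M : ℕ) (hM : 0 < M) (b : ℝ) (hb : 0 < b)
    (L : (Fin M → ℝ) → ℝ) (hconc : ConcaveOn ℝ Set.univ L) (hsmooth : ContDiff ℝ 1 L)
    (htaylor : ∀ x h : Fin M → ℝ, x ∈ stdSimplex ℝ (Fin M) →
      x + h ∈ stdSimplex ℝ (Fin M) →
      |L (x + h) - L x - fderiv ℝ L x h| ≤ b * ‖h‖ ^ 2)
    (φ : ℕ → Fin M → ℝ) (hφ1 : φ 1 ∈ stdSimplex ℝ (Fin M))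
    (idx : ℕ → Fin M)
    (hmax : ∀ n : ℕ, 1 ≤ n → ∀ j : Fin M,
      fderiv ℝ L (φ n) (Pi.single j 1) ≤ fderiv ℝ L (φ n) (Pi.single (idx n) 1))
    (hupd : ∀ n : ℕ, 1 ≤ n →
      φ (n + 1) = (1 - 1 / (n : ℝ)) • φ n + (1 / (n : ℝ)) • (Pi.single (idx n) 1 : Fin M → ℝ)) :
    ∃ m : ℝ, IsGreatest (L '' stdSimplex ℝ (Fin M)) m ∧
      Tendsto (fun n => L (φ n)) atTop (nhds m) := by
  have : Nonempty (Fin M) := Fin.pos_iff_nonempty.mp hM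
  obtain ⟨ψ, hψ, hψmax⟩ := (isCompact_stdSimplex ℝ (Fin M)).exists_isMaxOn
    ⟨_, single_mem_stdSimplex ℝ (Classical.arbitrary _)⟩ hsmooth.continuous.continuousOn
  have hmem : ∀ n, 1 ≤ n → φ n ∈ stdSimplex ℝ (Fin M) :=
    (convex_stdSimplex ℝ _).mem_of_averaging_step hφ1
      (fun n => single_mem_stdSimplex ℝ (idx n)) hupd
  have hgap : Tendsto (fun n => L ψ - L (φ n)) atTop (𝓝 0) := by
    refine tendsto_zero_of_le_one_sub_inv_mul_add hb.le
      (fun n hn => sub_nonneg.2 (hψmax (hmem n hn))) fun n hn => ?_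
    have hn' : (1 : ℝ) ≤ n := by exact_mod_cast hn
    have hstep := sub_frankWolfe_step_le hb.le
      (hconc.subset (Set.subset_univ _) (convex_stdSimplex ℝ _)) htaylor (hmem n hn) hψ
      (hmax n hn) (by positivity) (div_le_one_of_le₀ hn' n.cast_nonneg)
    rwa [one_div_pow, mul_one_div, ← hupd n hn] at hstep
  refine ⟨L ψ, ⟨⟨ψ, hψ, rfl⟩, fun _ ⟨x, hx, hLx⟩ => hLx ▸ hψmax hx⟩, ?_⟩
  simpa using hgap.const_sub (L ψ)
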